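/- Let x ∈ ℝⁿ and d ∈ [0, 1], and suppose B_ε(x) ∩ Ω = x + (B_ε ∩ {y_n < ε d}) (a ball cut by a hyperplane at height εd). Then ⨍_{B_ε(x) ∩ Ω} (y - x) dy = -s_ε e_n, where s_ε = (|B₁^{n-1}| / ((n+1) |B_{1,d}^n|)) · ε · (1 - d²)^{(n+1)/2}. -/

import Mathlib

open MeasureTheory Metric Set Pointwise

set_option maxHeartbeats 1000000

lemma volV (m : ℕ) (hm : 1 ≤ m) (t : ℝ) :
    volume {w : Fin m → ℝ | ∑ j, w j ^ 2 < 1 - t^2} =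
      ENNReal.ofReal (Real.sqrt (1-t^2) ^ m) * volume (ball (0 : EuclideanSpace ℝ (Fin m)) 1) := by
  rcases le_or_gt (1 - t^2) 0 with h | h
  · have h1 : {w : Fin m → ℝ | ∑ j, w j ^ 2 < 1 - t^2} = ∅ := by
      ext w; simp only [mem_setOf_eq, mem_empty_iff_false, iff_false, not_lt]
      exact h.trans (Finset.sum_nonneg fun j _ => sq_nonneg _)
    rw [h1, Real.sqrt_eq_zero_of_nonpos h, zero_pow (by omega), ENNReal.ofReal_zero,
      zero_mul, measure_empty]
  · have mp := EuclideanSpace.volume_preserving_symm_measurableEquiv_toLp (Fin m)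
    haveI : Nontrivial (EuclideanSpace ℝ (Fin m)) := by
      refine nontrivial_of_ne (EuclideanSpace.single ⟨0, by omega⟩ 1) 0 ?_
      intro hcon
      have := congrFun (congrArg WithLp.ofLp hcon) ⟨0, by omega⟩
      simp [EuclideanSpace.single_apply] at this
    have hpre : ((MeasurableEquiv.toLp 2 (Fin m → ℝ)).symm) ⁻¹'
        {w : Fin m → ℝ | ∑ j, w j ^ 2 < 1 - t^2} =
        ball (0 : EuclideanSpace ℝ (Fin m)) (Real.sqrt (1-t^2)) := by
      ext z
      simp only [mem_preimage, mem_setOf_eq, mem_ball, dist_zero_right, EuclideanSpace.norm_eq]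
      rw [show ((MeasurableEquiv.toLp 2 (Fin m → ℝ)).symm) z = fun i => z i from rfl]
      rw [← Real.sqrt_lt_sqrt_iff (Finset.sum_nonneg fun j _ => sq_nonneg _)]
      simp [sq_abs]
    rw [← mp.measure_preimage (by
      apply MeasurableSet.nullMeasurableSet
      have : IsOpen {w : Fin m → ℝ | ∑ j, w j ^ 2 < 1 - t^2} :=
        isOpen_lt (by fun_prop) continuous_const
      exact this.measurableSet), hpre,
      Measure.addHaar_ball _ _ (Real.sqrt_nonneg _), finrank_euclideanSpace_fin]

lemma calc1 (m : ℕ) (d : ℝ) (hd0 : (-1:ℝ) ≤ d) (hd1 : d ≤ 1) :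
    ∫ t in (-1:ℝ)..d, t * (1 - t^2) ^ ((m:ℝ)/2) =
      -((1-d^2) ^ (((m:ℝ)+2)/2)) / ((m:ℝ)+2) := by
  have hm2 : (0:ℝ) < (m:ℝ) + 2 := by positivity
  set p : ℝ := ((m:ℝ)+2)/2 with hp
  have hppos : 0 < p := by positivity
  have hp1 : 1 ≤ p := by rw [hp]; rw [le_div_iff₀ (by norm_num)]; push_cast; linarith
  set F : ℝ → ℝ := fun t => -(1-t^2) ^ p / ((m:ℝ)+2) with hF
  have hcont : ContinuousOn F (Icc (-1) d) := by
    apply ContinuousOn.div_const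
    apply ContinuousOn.neg
    apply ContinuousOn.rpow_const
    · fun_prop
    · intro t _; right; exact hppos.le
  have hderiv : ∀ t ∈ Ioo (-1:ℝ) d, HasDerivAt F (t * (1 - t^2) ^ ((m:ℝ)/2)) t := by
    intro t ht
    have ht2 : 1 - t^2 > 0 := by nlinarith [ht.1, ht.2]
    have h1 : HasDerivAt (fun t : ℝ => 1 - t^2) (-2*t) t := by
      simpa using ((hasDerivAt_pow 2 t).const_sub 1)
    have h2 : HasDerivAt (fun t : ℝ => (1-t^2) ^ p) (p * (1-t^2) ^ (p-1) * (-2*t)) t :=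
      by have := (Real.hasDerivAt_rpow_const (p := p) (Or.inl ht2.ne')).comp t h1; exact this
    have h3 := (h2.neg.div_const ((m:ℝ)+2))
    refine h3.congr_deriv ?_
    have hpm : p - 1 = (m:ℝ)/2 := by rw [hp]; ring
    rw [hpm]
    field_simp
    ring
  have hint : IntervalIntegrable (fun t => t * (1 - t^2) ^ ((m:ℝ)/2)) volume (-1) d := by
    apply ContinuousOn.intervalIntegrable
    apply ContinuousOn.mul continuousOn_id
    apply ContinuousOn.rpow_const (by fun_prop)
    intro t _; right; positivity
  rw [intervalIntegral.integral_eq_sub_of_hasDeriv_right_of_le hd0 hcont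
    (fun t ht => (hderiv t ht).hasDerivWithinAt) hint]
  have : (1:ℝ) - (-1:ℝ)^2 = 0 := by norm_num
  rw [hF]
  simp only [this, Real.zero_rpow hppos.ne']
  ring

lemma sliceIntegral (m : ℕ) (hm : 1 ≤ m) (d : ℝ) (hd0 : (0:ℝ) ≤ d) (hd1 : d ≤ 1) :
    ∫ w in {w : Fin (m+1) → ℝ | ∑ j, w j ^ 2 < 1 ∧ w (Fin.last m) < d}, w (Fin.last m) ∂volume
    = -((volume (ball (0 : EuclideanSpace ℝ (Fin m)) 1)).toReal / ((m:ℝ)+2)) *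
        (1-d^2) ^ (((m:ℝ)+2)/2) := by
  have e2 := MeasurableEquiv.piFinSuccAbove (fun _ : Fin (m+1) => ℝ) (Fin.last m)
  have himg : (MeasurableEquiv.piFinSuccAbove (fun _ : Fin (m+1) => ℝ) (Fin.last m)) ''
      {w : Fin (m+1) → ℝ | ∑ j, w j ^ 2 < 1 ∧ w (Fin.last m) < d} =
      {p : ℝ × (Fin m → ℝ) | p.1 ^ 2 + ∑ j, p.2 j ^ 2 < 1 ∧ p.1 < d} := by
    rw [MeasurableEquiv.image_eq_preimage_symm]
    ext p
    have hsymm : (MeasurableEquiv.piFinSuccAbove (fun _ : Fin (m+1) => ℝ) (Fin.last m)).symm p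
      = (Fin.last m).insertNth p.1 p.2 := rfl
    simp only [mem_preimage, mem_setOf_eq, hsymm]
    rw [Fin.sum_univ_succAbove
      (fun k : Fin (m+1) => (Fin.insertNth (α := fun _ => ℝ) (Fin.last m) p.1 p.2 k)^2)
      (Fin.last m)]
    simp [Fin.insertNth_apply_succAbove]
  have step1 : ∫ w in {w : Fin (m+1) → ℝ | ∑ j, w j ^ 2 < 1 ∧ w (Fin.last m) < d},
        w (Fin.last m) ∂volume
      = ∫ p in {p : ℝ × (Fin m → ℝ) | p.1 ^ 2 + ∑ j, p.2 j ^ 2 < 1 ∧ p.1 < d},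
        p.1 ∂(volume : Measure (ℝ × (Fin m → ℝ))) := by
    rw [← himg]
    exact ((volume_preserving_piFinSuccAbove (fun _ : Fin (m+1) => ℝ)
      (Fin.last m)).setIntegral_image_emb
      (MeasurableEquiv.piFinSuccAbove (fun _ : Fin (m+1) => ℝ)
        (Fin.last m)).measurableEmbedding (fun p => p.1) _).symm
  rw [step1]
  have hSopen : IsOpen {p : ℝ × (Fin m → ℝ) | p.1 ^ 2 + ∑ j, p.2 j ^ 2 < 1 ∧ p.1 < d} := by
    rw [Set.setOf_and]
    apply IsOpen.inter
    · apply isOpen_lt _ continuous_const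
      apply Continuous.add (by fun_prop)
      exact continuous_finset_sum _ fun j _ => ((continuous_apply j).comp continuous_snd).pow 2
    · exact isOpen_lt continuous_fst continuous_const
  have hSmeas := hSopen.measurableSet
  have hsub : {p : ℝ × (Fin m → ℝ) | p.1 ^ 2 + ∑ j, p.2 j ^ 2 < 1 ∧ p.1 < d} ⊆
      Icc (-1:ℝ) 1 ×ˢ Icc (fun _ => (-1:ℝ)) (fun _ => (1:ℝ)) := by
    rintro ⟨t, w⟩ ⟨h1, -⟩
    simp only [mem_setOf_eq] at h1
    have hsum : (0:ℝ) ≤ ∑ j, w j ^ 2 := Finset.sum_nonneg fun j _ => sq_nonneg _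
    have ht2 : t ^ 2 ≤ 1 := by nlinarith
    have habs : |t| ≤ 1 := (sq_le_one_iff_abs_le_one t).1 ht2
    have hj : ∀ j, |w j| ≤ 1 := by
      intro j
      refine (sq_le_one_iff_abs_le_one (w j)).1 ?_
      have : w j ^ 2 ≤ ∑ k, w k ^ 2 :=
        Finset.single_le_sum (fun k _ => sq_nonneg (w k)) (Finset.mem_univ j)
      nlinarith [sq_nonneg t]
    refine ⟨mem_Icc.2 (abs_le.1 habs), mem_Icc.2 ⟨fun j => (abs_le.1 (hj j)).1,
      fun j => (abs_le.1 (hj j)).2⟩⟩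
  have hIntOn : IntegrableOn (fun p : ℝ × (Fin m → ℝ) => p.1)
      {p : ℝ × (Fin m → ℝ) | p.1 ^ 2 + ∑ j, p.2 j ^ 2 < 1 ∧ p.1 < d} volume := by
    have hK : IsCompact (Icc (-1:ℝ) 1 ×ˢ Icc (fun _ : Fin m => (-1:ℝ)) (fun _ => (1:ℝ))) :=
      isCompact_Icc.prod isCompact_Icc
    exact (continuous_fst.continuousOn.integrableOn_compact hK).mono_set hsub
  have step2 : ∫ p in {p : ℝ × (Fin m → ℝ) | p.1 ^ 2 + ∑ j, p.2 j ^ 2 < 1 ∧ p.1 < d},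
        p.1 ∂(volume : Measure (ℝ × (Fin m → ℝ)))
      = ∫ t : ℝ, ∫ w : Fin m → ℝ,
        ({p : ℝ × (Fin m → ℝ) | p.1 ^ 2 + ∑ j, p.2 j ^ 2 < 1 ∧ p.1 < d}).indicator
          (fun p => p.1) (t, w) := by
    rw [← integral_indicator hSmeas, Measure.volume_eq_prod]
    refine integral_prod _ ?_
    rw [← Measure.volume_eq_prod]
    exact (integrable_indicator_iff hSmeas).2 hIntOn
  rw [step2]
  have hVmeas : ∀ t : ℝ, MeasurableSet {w : Fin m → ℝ | ∑ j, w j ^ 2 < 1 - t^2} := by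
    intro t
    refine (isOpen_lt ?_ continuous_const).measurableSet
    exact continuous_finset_sum _ fun j _ => (continuous_apply j).pow 2
  have step3 : ∀ t : ℝ, (∫ w : Fin m → ℝ,
        ({p : ℝ × (Fin m → ℝ) | p.1 ^ 2 + ∑ j, p.2 j ^ 2 < 1 ∧ p.1 < d}).indicator
          (fun p => p.1) (t, w))
      = (Iio d).indicator
          (fun s => (volume {w : Fin m → ℝ | ∑ j, w j ^ 2 < 1 - s^2}).toReal * s) t := by
    intro t
    rcases lt_or_ge t d with ht | ht
    · have heq : (fun w : Fin m → ℝ =>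
          ({p : ℝ × (Fin m → ℝ) | p.1 ^ 2 + ∑ j, p.2 j ^ 2 < 1 ∧ p.1 < d}).indicator
            (fun p => p.1) (t, w)) =
          (fun w => ({w : Fin m → ℝ | ∑ j, w j ^ 2 < 1 - t^2}).indicator (fun _ => t) w) := by
        funext w
        simp only [Set.indicator_apply, Set.mem_setOf_eq]
        refine if_congr ?_ rfl rfl
        constructor
        · rintro ⟨h1, -⟩; linarith
        · intro h; exact ⟨by linarith, ht⟩
      rw [heq, integral_indicator_const _ (hVmeas t),
        Set.indicator_of_mem (show t ∈ Iio d from ht), smul_eq_mul, measureReal_def]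
    · have heq : (fun w : Fin m → ℝ =>
          ({p : ℝ × (Fin m → ℝ) | p.1 ^ 2 + ∑ j, p.2 j ^ 2 < 1 ∧ p.1 < d}).indicator
            (fun p => p.1) (t, w)) = fun _ => (0:ℝ) := by
        funext w
        simp only [Set.indicator_apply, Set.mem_setOf_eq]
        rw [if_neg]
        rintro ⟨-, h2⟩
        exact absurd h2 (not_lt.2 ht)
      rw [heq, integral_zero, Set.indicator_of_notMem (show t ∉ Iio d by simpa using ht)]
  have step3' : (∫ t : ℝ, ∫ w : Fin m → ℝ,
        ({p : ℝ × (Fin m → ℝ) | p.1 ^ 2 + ∑ j, p.2 j ^ 2 < 1 ∧ p.1 < d}).indicator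
          (fun p => p.1) (t, w))
      = ∫ t in Iio d, (volume {w : Fin m → ℝ | ∑ j, w j ^ 2 < 1 - t^2}).toReal * t :=
    (integral_congr_ae (Filter.Eventually.of_forall step3)).trans
      (integral_indicator measurableSet_Iio)
  rw [step3']
  have step4 : ∫ t in Iio d, (volume {w : Fin m → ℝ | ∑ j, w j ^ 2 < 1 - t^2}).toReal * t
      = ∫ t in Ioo (-1:ℝ) d, (volume {w : Fin m → ℝ | ∑ j, w j ^ 2 < 1 - t^2}).toReal * t := by
    have h1 : ∫ t in Iio d, (volume {w : Fin m → ℝ | ∑ j, w j ^ 2 < 1 - t^2}).toReal * t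
        = ∫ t in Iio d, (Ioo (-1:ℝ) d).indicator
            (fun t => (volume {w : Fin m → ℝ | ∑ j, w j ^ 2 < 1 - t^2}).toReal * t) t := by
      apply setIntegral_congr_fun measurableSet_Iio
      intro t ht
      rcases lt_or_ge (-1:ℝ) t with h | h
      · rw [indicator_of_mem (mem_Ioo.2 ⟨h, ht⟩)]
      · rw [indicator_of_notMem (by simp [mem_Ioo]; intro h'; linarith)]
        have hemp : {w : Fin m → ℝ | ∑ j, w j ^ 2 < 1 - t^2} = ∅ := by
          ext w
          simp only [mem_setOf_eq, mem_empty_iff_false, iff_false, not_lt]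
          have h0 : 1 - t^2 ≤ 0 := by nlinarith
          exact h0.trans (Finset.sum_nonneg fun j _ => sq_nonneg _)
        show (volume {w : Fin m → ℝ | ∑ j, w j ^ 2 < 1 - t^2}).toReal * t = 0
        rw [hemp]
        simp
    rw [h1, setIntegral_indicator measurableSet_Ioo, inter_eq_right.2 Ioo_subset_Iio_self]
  rw [step4]
  have step5 : ∫ t in Ioo (-1:ℝ) d, (volume {w : Fin m → ℝ | ∑ j, w j ^ 2 < 1 - t^2}).toReal * t
      = ∫ t in Ioo (-1:ℝ) d,
        (volume (ball (0 : EuclideanSpace ℝ (Fin m)) 1)).toReal * (t * (1-t^2) ^ ((m:ℝ)/2)) := by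
    apply setIntegral_congr_fun measurableSet_Ioo
    intro t ht
    have h1t : 0 ≤ 1 - t^2 := by nlinarith [ht.1, ht.2.trans_le hd1]
    show (volume {w : Fin m → ℝ | ∑ j, w j ^ 2 < 1 - t^2}).toReal * t
      = (volume (ball (0 : EuclideanSpace ℝ (Fin m)) 1)).toReal * (t * (1-t^2) ^ ((m:ℝ)/2))
    rw [volV m hm t, ENNReal.toReal_mul, ENNReal.toReal_ofReal (by positivity)]
    rw [Real.sqrt_eq_rpow, ← Real.rpow_natCast ((1-t^2) ^ ((1:ℝ)/2 : ℝ)) m,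
      ← Real.rpow_mul h1t]
    ring_nf
  rw [step5, integral_const_mul]
  have step6 : ∫ t in Ioo (-1:ℝ) d, t * (1-t^2) ^ ((m:ℝ)/2)
      = ∫ t in (-1:ℝ)..d, t * (1-t^2) ^ ((m:ℝ)/2) := by
    rw [intervalIntegral.integral_of_le (by linarith), integral_Ioc_eq_integral_Ioo]
  rw [step6, calc1 m d (by linarith) hd1]
  field_simp

lemma euclidCoordIntegral (m : ℕ) (hm : 1 ≤ m) (d : ℝ) (hd0 : (0:ℝ) ≤ d) (hd1 : d ≤ 1) :
    ∫ z in {z : EuclideanSpace ℝ (Fin (m+1)) | ‖z‖ < 1 ∧ z (Fin.last m) < d}, z (Fin.last m)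
      ∂volume
    = -((volume (ball (0 : EuclideanSpace ℝ (Fin m)) 1)).toReal / ((m:ℝ)+2)) *
        (1-d^2) ^ (((m:ℝ)+2)/2) := by
  have himg : ((MeasurableEquiv.toLp 2 (Fin (m+1) → ℝ)).symm) ''
      {z : EuclideanSpace ℝ (Fin (m+1)) | ‖z‖ < 1 ∧ z (Fin.last m) < d} =
      {w : Fin (m+1) → ℝ | ∑ j, w j ^ 2 < 1 ∧ w (Fin.last m) < d} := by
    rw [MeasurableEquiv.image_eq_preimage_symm]
    ext w
    have happ : ∀ k, (((MeasurableEquiv.toLp 2 (Fin (m+1) → ℝ)).symm).symm w) k = w k := fun _ => rfl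
    simp only [mem_preimage, mem_setOf_eq, happ, EuclideanSpace.norm_eq]
    rw [show (1:ℝ) = Real.sqrt 1 by simp]
    rw [Real.sqrt_lt_sqrt_iff (Finset.sum_nonneg fun j _ => sq_nonneg _)]
    simp [sq_abs]
  rw [← sliceIntegral m hm d hd0 hd1, ← himg,
    (EuclideanSpace.volume_preserving_symm_measurableEquiv_toLp (Fin (m+1))).setIntegral_image_emb
      ((MeasurableEquiv.toLp 2 (Fin (m+1) → ℝ)).symm).measurableEmbedding (fun w => w (Fin.last m)) _]
  rfl

lemma euclidCoordZero (m : ℕ) (d : ℝ) (i : Fin (m+1)) (hi : i ≠ Fin.last m) :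
    ∫ z in {z : EuclideanSpace ℝ (Fin (m+1)) | ‖z‖ < 1 ∧ z (Fin.last m) < d}, z i ∂volume = 0 := by
  set S := {z : EuclideanSpace ℝ (Fin (m+1)) | ‖z‖ < 1 ∧ z (Fin.last m) < d} with hS
  set R : EuclideanSpace ℝ (Fin (m+1)) ≃ₗᵢ[ℝ] EuclideanSpace ℝ (Fin (m+1)) :=
    LinearIsometryEquiv.piLpCongrRight 2
      (fun k : Fin (m+1) => if k = i then LinearIsometryEquiv.neg ℝ
        else LinearIsometryEquiv.refl ℝ ℝ) with hR
  have hRapp : ∀ (z : EuclideanSpace ℝ (Fin (m+1))) k, R z k = if k = i then -(z k) else z k := by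
    intro z k
    by_cases h : k = i
    · subst h
      simp [hR, LinearIsometryEquiv.piLpCongrRight_apply]
    · simp [hR, LinearIsometryEquiv.piLpCongrRight_apply, h]
  have hinv : ∀ z : EuclideanSpace ℝ (Fin (m+1)), R (R z) = z := by
    intro z
    ext k
    by_cases h : k = i <;> simp [hRapp, h]
  have hmemS : ∀ z : EuclideanSpace ℝ (Fin (m+1)), z ∈ S → R z ∈ S := by
    rintro z ⟨hz1, hz2⟩
    refine ⟨by rwa [R.norm_map], ?_⟩
    rw [hRapp z (Fin.last m), if_neg (fun h => hi h.symm)]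
    exact hz2
  have hSimg : R '' S = S := by
    ext y
    constructor
    · rintro ⟨z, hz, rfl⟩; exact hmemS z hz
    · intro hy; exact ⟨R y, hmemS y hy, hinv y⟩
  have key : ∫ z in S, z i ∂volume = -∫ z in S, z i ∂volume := by
    conv_lhs => rw [← hSimg]
    rw [R.measurePreserving.setIntegral_image_emb
      R.toHomeomorph.toMeasurableEquiv.measurableEmbedding (fun z => z i) S]
    have : ∀ z : EuclideanSpace ℝ (Fin (m+1)), R z i = -(z i) := by
      intro z; rw [hRapp, if_pos rfl]
    simp_rw [this]
    exact integral_neg _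
  linarith [key]

lemma euclidVecIntegral (m : ℕ) (hm : 1 ≤ m) (d : ℝ) (hd0 : (0:ℝ) ≤ d) (hd1 : d ≤ 1) :
    ∫ z in {z : EuclideanSpace ℝ (Fin (m+1)) | ‖z‖ < 1 ∧ z (Fin.last m) < d},
      z ∂volume
    = (-((volume (ball (0 : EuclideanSpace ℝ (Fin m)) 1)).toReal / ((m:ℝ)+2)) *
        (1-d^2) ^ (((m:ℝ)+2)/2)) • EuclideanSpace.single (Fin.last m) (1:ℝ) := by
  have hInt : IntegrableOn (fun z : EuclideanSpace ℝ (Fin (m+1)) => z)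
      {z : EuclideanSpace ℝ (Fin (m+1)) | ‖z‖ < 1 ∧ z (Fin.last m) < d} volume := by
    refine (continuous_id.continuousOn.integrableOn_compact
      (isCompact_closedBall (0 : EuclideanSpace ℝ (Fin (m+1))) 1)).mono_set ?_
    rintro z ⟨hz1, -⟩
    simpa [mem_closedBall, dist_zero_right] using hz1.le
  have hcoord : ∀ i, (∫ z in {z : EuclideanSpace ℝ (Fin (m+1)) | ‖z‖ < 1 ∧
      z (Fin.last m) < d}, z ∂volume) i
      = ∫ z in {z : EuclideanSpace ℝ (Fin (m+1)) | ‖z‖ < 1 ∧ z (Fin.last m) < d}, z i ∂volume := by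
    intro i
    exact ((EuclideanSpace.proj (𝕜 := ℝ) i).integral_comp_comm hInt).symm
  ext i
  rw [hcoord i]
  rcases eq_or_ne i (Fin.last m) with rfl | hi
  · rw [euclidCoordIntegral m hm d hd0 hd1]
    simp [EuclideanSpace.single_apply]
  · rw [euclidCoordZero m d i hi]
    simp [EuclideanSpace.single_apply, hi]

theorem barycenter_cut_ball (n : ℕ) (hn : 2 ≤ n) (ε d : ℝ) (hε : 0 < ε)
    (hd : d ∈ Set.Icc (0 : ℝ) 1) (x : EuclideanSpace ℝ (Fin n))
    (Ω : Set (EuclideanSpace ℝ (Fin n)))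
    (hΩ : Metric.ball x ε ∩ Ω =
      {y | y ∈ Metric.ball x ε ∧ (y - x) ⟨n - 1, by omega⟩ < ε * d}) :
    let κ : ℝ := (volume (Metric.ball (0 : EuclideanSpace ℝ (Fin (n - 1))) 1)).toReal
    let vol2 : ℝ := (volume {y : EuclideanSpace ℝ (Fin n) |
        y ∈ Metric.ball 0 1 ∧ y ⟨n - 1, by omega⟩ < d}).toReal
    let sE : ℝ := κ / ((n + 1) * vol2) * ε * (1 - d ^ 2) ^ (((n : ℝ) + 1) / 2)
    (⨍ y in Metric.ball x ε ∩ Ω, (y - x)) =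
      (-sE) • (EuclideanSpace.single (⟨n - 1, by omega⟩ : Fin n) (1 : ℝ)) := by
  intro κ vol2 sE
  obtain ⟨m, rfl⟩ : ∃ m, n = m + 1 := ⟨n - 1, by omega⟩
  have hm : 1 ≤ m := by omega
  obtain ⟨hd0, hd1⟩ := hd
  have hidx : (⟨m + 1 - 1, by omega⟩ : Fin (m+1)) = Fin.last m := rfl
  set S := {z : EuclideanSpace ℝ (Fin (m+1)) | ‖z‖ < 1 ∧ z (Fin.last m) < d} with hSdef
  have happly : ∀ (y : EuclideanSpace ℝ (Fin (m+1))) (c : ℝ)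
      (z : EuclideanSpace ℝ (Fin (m+1))) (k : Fin (m+1)), (y + c • z) k = y k + c * z k :=
    fun _ _ _ _ => rfl
  have hsub : ∀ (y x : EuclideanSpace ℝ (Fin (m+1))) (k : Fin (m+1)),
      (y - x) k = y k - x k := fun _ _ _ => rfl
  have hA : Metric.ball x ε ∩ Ω = (fun z : EuclideanSpace ℝ (Fin (m+1)) => x + ε • z) '' S := by
    rw [hΩ]
    ext y
    simp only [mem_setOf_eq, mem_image, hSdef, mem_ball, hidx]
    constructor
    · rintro ⟨hy1, hy2⟩
      refine ⟨ε⁻¹ • (y - x), ⟨?_, ?_⟩, ?_⟩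
      · rw [norm_smul, Real.norm_eq_abs, abs_of_pos (inv_pos.2 hε)]
        rw [dist_eq_norm] at hy1
        calc ε⁻¹ * ‖y - x‖ < ε⁻¹ * ε := mul_lt_mul_of_pos_left hy1 (inv_pos.2 hε)
          _ = 1 := inv_mul_cancel₀ hε.ne'
      · show ε⁻¹ * ((y - x) (Fin.last m)) < d
        have hy2' : (y - x) (Fin.last m) < ε * d := hy2
        calc ε⁻¹ * ((y - x) (Fin.last m)) < ε⁻¹ * (ε * d) :=
              mul_lt_mul_of_pos_left hy2' (inv_pos.2 hε)
          _ = d := by rw [← mul_assoc, inv_mul_cancel₀ hε.ne', one_mul]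
      · rw [smul_smul, mul_inv_cancel₀ hε.ne', one_smul, add_sub_cancel]
    · rintro ⟨z, ⟨hz1, hz2⟩, rfl⟩
      constructor
      · rw [dist_eq_norm, add_sub_cancel_left, norm_smul, Real.norm_eq_abs, abs_of_pos hε]
        calc ε * ‖z‖ < ε * 1 := by exact mul_lt_mul_of_pos_left hz1 hε
          _ = ε := mul_one ε
      · show (x + ε • z - x) (Fin.last m) < ε * d
        rw [add_sub_cancel_left]
        show ε * z (Fin.last m) < ε * d
        exact mul_lt_mul_of_pos_left hz2 hε
  have himg2 : (fun z : EuclideanSpace ℝ (Fin (m+1)) => x + ε • z) '' S = x +ᵥ (ε • S) := by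
    rw [← Set.image_smul]
    exact (Set.image_image (fun a => x + a) (fun z : EuclideanSpace ℝ (Fin (m+1)) => ε • z) S).symm
  have hvolS_ne : volume S ≠ ⊤ := by
    refine (measure_mono (t := Metric.ball (0 : EuclideanSpace ℝ (Fin (m+1))) 1) ?_).trans_lt
      measure_ball_lt_top |>.ne
    rintro z ⟨hz1, -⟩
    simpa [mem_ball, dist_zero_right] using hz1
  have hvol : volume (Metric.ball x ε ∩ Ω) = ENNReal.ofReal (ε ^ (m+1)) * volume S := by
    rw [hA, himg2, measure_vadd, Measure.addHaar_smul, finrank_euclideanSpace_fin,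
      abs_of_pos (pow_pos hε _)]
  have hεp : (ε:ℝ) ^ (m+1) ≠ 0 := (pow_pos hε _).ne'
  have hIeq : ∫ y in Metric.ball x ε ∩ Ω, (y - x) ∂volume
      = (ε ^ (m+1) * ε) • ∫ z in S, z ∂volume := by
    rw [hA, himg2, show x +ᵥ (ε • S) = (x + ·) '' (ε • S) from rfl,
      (measurePreserving_add_left volume x).setIntegral_image_emb
        (MeasurableEquiv.addLeft x).measurableEmbedding (fun y => y - x) _]
    simp only [add_sub_cancel_left]
    have h2 := Measure.setIntegral_comp_smul_of_pos volume
      (fun z : EuclideanSpace ℝ (Fin (m+1)) => z) S hε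
    rw [finrank_euclideanSpace_fin] at h2
    rw [integral_smul] at h2
    calc ∫ z in ε • S, z ∂volume
        = (ε ^ (m+1)) • ((ε ^ (m+1))⁻¹ • ∫ z in ε • S, z ∂volume) := by
          rw [smul_smul, mul_inv_cancel₀ hεp, one_smul]
      _ = (ε ^ (m+1)) • (ε • ∫ z in S, z ∂volume) := by rw [← h2]
      _ = (ε ^ (m+1) * ε) • ∫ z in S, z ∂volume := by rw [smul_smul]
  rw [setAverage_eq, measureReal_def, hIeq, hvol, euclidVecIntegral m hm d hd0 hd1,
    ENNReal.toReal_mul, ENNReal.toReal_ofReal (by positivity), smul_smul, smul_smul]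
  have hvol2 : vol2 = (volume S).toReal := by
    have hset : {y : EuclideanSpace ℝ (Fin (m+1)) |
        y ∈ Metric.ball 0 1 ∧ y ⟨m + 1 - 1, by omega⟩ < d} = S := by
      ext z
      simp [hSdef, mem_ball, dist_zero_right, hidx, Fin.last]
    show (volume {y : EuclideanSpace ℝ (Fin (m+1)) |
        y ∈ Metric.ball 0 1 ∧ y ⟨m + 1 - 1, by omega⟩ < d}).toReal = (volume S).toReal
    rw [hset]
  have hκ : κ = (volume (ball (0 : EuclideanSpace ℝ (Fin m)) 1)).toReal := rfl
  rw [show (EuclideanSpace.single (⟨m + 1 - 1, by omega⟩ : Fin (m+1)) (1:ℝ))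
    = EuclideanSpace.single (Fin.last m) (1:ℝ) from rfl]
  congr 1
  show (ε ^ (m+1) * (volume S).toReal)⁻¹ * (ε ^ (m+1) * ε) *
      (-((volume (ball (0 : EuclideanSpace ℝ (Fin m)) 1)).toReal / ((m:ℝ)+2)) *
        (1-d^2) ^ (((m:ℝ)+2)/2)) = -sE
  have hsE : sE = κ / ((↑(m+1) + 1) * vol2) * ε * (1 - d ^ 2) ^ ((↑(m + 1) + (1:ℝ)) / 2) := rfl
  rw [hsE, hvol2, hκ]
  have hcast1 : ((m + 1 : ℕ) : ℝ) + 1 = (m:ℝ) + 2 := by push_cast; ring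
  rw [hcast1, ← div_div]
  set v := (volume S).toReal
  set K := (volume (ball (0 : EuclideanSpace ℝ (Fin m)) 1)).toReal
  set X := (1 - d^2) ^ (((m:ℝ)+2)/2)
  have h1 : (ε ^ (m+1))⁻¹ * (ε ^ (m+1)) = 1 := inv_mul_cancel₀ hεp
  rw [mul_inv]
  linear_combination (v⁻¹ * ε * (-(K/((m:ℝ)+2)) * X)) * h1
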